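/- arXiv:math/9809008 — 5 statements merged into one kernel-verified Lean document; each statement's English description precedes it below -/
import Mathlib

section
/- Let p, q, r ≥ 2 be integers and let G be the Gram matrix of the T_{p,q,r} lattice, a square integer matrix of size p+q+r−2. Then det G = (−1)^{p+q+r−1} · (pqr − pq − pr − qr). (In particular the discriminant of T_{p,q,r} is, up to sign, pqr − pq − pr − qr.) -/
/-- Adjacency along a path (leg): consecutive vertices are adjacent. -/
def legAdj {m : ℕ} (i j : Fin m) : Bool :=
  (i.val + 1 == j.val) || (j.val + 1 == i.val)

/-- The vertex set of the `T_{p,q,r}` graph: a central vertex (`none`) together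
with three legs of `p-1`, `q-1`, `r-1` further vertices. -/
abbrev TVertex (p q r : ℕ) := Option (Fin (p - 1) ⊕ (Fin (q - 1) ⊕ Fin (r - 1)))

/-- Adjacency in the `T_{p,q,r}` graph: the central vertex is adjacent to the first
vertex of each leg, and consecutive vertices of a leg are adjacent. -/
def TAdj {p q r : ℕ} : TVertex p q r → TVertex p q r → Bool
  | none, some (Sum.inl i) => i.val == 0
  | none, some (Sum.inr (Sum.inl i)) => i.val == 0
  | none, some (Sum.inr (Sum.inr i)) => i.val == 0
  | some (Sum.inl i), none => i.val == 0
  | some (Sum.inr (Sum.inl i)), none => i.val == 0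
  | some (Sum.inr (Sum.inr i)), none => i.val == 0
  | some (Sum.inl i), some (Sum.inl j) => legAdj i j
  | some (Sum.inr (Sum.inl i)), some (Sum.inr (Sum.inl j)) => legAdj i j
  | some (Sum.inr (Sum.inr i)), some (Sum.inr (Sum.inr j)) => legAdj i j
  | _, _ => false

/-- The Gram matrix of the `T_{p,q,r}` lattice: every vertex is labelled `-2`
(diagonal entries), with off-diagonal entry `1` for adjacent vertices and `0`
otherwise.  Its size is `p + q + r - 2`. -/
def TGram (p q r : ℕ) : Matrix (TVertex p q r) (TVertex p q r) ℤ :=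
  Matrix.of fun v w => if v = w then -2 else if TAdj v w then 1 else 0

/-!
Deleting the central vertex leaves three disjoint paths, and the Gram matrix `P n` of a path
with `n` vertices has determinant `(-1)^n (n+1)` by the three-term recursion along the path.
The Schur complement of the block of the legs is the `1 × 1` matrix
`-2 - ∑ (P n)⁻¹ 0 0`, one term per leg, and by the cofactor formula
`(P (n+1))⁻¹ 0 0 = det (P n) / det (P (n+1)) = -(n+1)/(n+2)`. For legs with `p-1, q-1, r-1`
vertices this gives `(-1)^(p+q+r-3) pqr · (1 - 1/p - 1/q - 1/r)`.
-/

open Matrix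

section Path

variable {R : Type*} [CommRing R]

variable (R) in
def pathGram (n : ℕ) : Matrix (Fin n) (Fin n) R :=
  of fun i j => if i = j then -2 else if legAdj i j then 1 else 0

lemma pathGram_submatrix_succ (n : ℕ) :
    (pathGram R (n + 1)).submatrix Fin.succ Fin.succ = pathGram R n := by
  ext i j
  simp [pathGram, legAdj]

lemma det_pathGram_succ_succ (n : ℕ) :
    (pathGram R (n + 2)).det = -2 * (pathGram R (n + 1)).det - (pathGram R n).det := by
  set P := pathGram R (n + 2)
  have hminor : (P.submatrix Fin.succ (Fin.succAbove 1)).det = (pathGram R n).det := by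
    rw [det_succ_column_zero, Fintype.sum_eq_single 0]
    · have h₁₀ : P 1 0 = 1 := by simp [P, pathGram, legAdj]
      have hsub : (P.submatrix Fin.succ (Fin.succAbove 1)).submatrix (Fin.succAbove 0) Fin.succ =
          pathGram R n := by
        ext i j
        simp [P, pathGram, legAdj]
      rw [hsub]
      simp [h₁₀]
    · intro i hi
      have hi' : (i : ℕ) ≠ 0 := Fin.val_ne_zero_iff.mpr hi
      have hP : P i.succ 0 = 0 := by simp [P, pathGram, legAdj, hi']
      simp [hP]
  have h₀₀ : P 0 0 = -2 := by simp [P, pathGram]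
  have h₀₁ : P 0 1 = 1 := by simp [P, pathGram, legAdj]
  rw [det_succ_row_zero, Fin.sum_univ_succ, Fin.sum_univ_succ, Finset.sum_eq_zero]
  · simp only [Fin.succ_zero_eq_one, Fin.succAbove_zero, P, pathGram_submatrix_succ, h₀₀, h₀₁,
      hminor, Fin.coe_ofNat_eq_mod, Nat.zero_mod, Nat.one_mod, pow_zero, pow_one, add_zero]
    ring
  · intro j _
    simp [P, pathGram, legAdj, Fin.ext_iff]

lemma det_pathGram (n : ℕ) : (pathGram R n).det = (-1) ^ n * (n + 1) := by
  induction n using Nat.twoStepInduction with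
  | zero => simp
  | one => norm_num [pathGram]
  | more n ih₁ ih₂ =>
    rw [det_pathGram_succ_succ, ih₁, ih₂]
    push_cast
    ring

variable {K : Type*} [Field K] [CharZero K]

lemma isUnit_det_pathGram (n : ℕ) : IsUnit (pathGram K n).det := by
  rw [det_pathGram, isUnit_iff_ne_zero]
  exact mul_ne_zero (pow_ne_zero _ (by norm_num)) (by exact_mod_cast n.succ_ne_zero)

lemma inv_pathGram_zero_zero (n : ℕ) :
    (pathGram K (n + 1))⁻¹ 0 0 = -(n + 1) / (n + 2) := by
  rw [inv_def, Matrix.smul_apply, adjugate_fin_succ_eq_det_submatrix, Fin.succAbove_zero,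
    pathGram_submatrix_succ, det_pathGram, det_pathGram, Ring.inverse_eq_inv]
  have : (n : K) + 2 ≠ 0 := by exact_mod_cast (n + 1).succ_ne_zero
  simp only [Fin.val_zero, add_zero, pow_zero, one_mul, smul_eq_mul, pow_succ, Nat.cast_succ,
    add_assoc, one_add_one_eq_two]
  field_simp

end Path

section Blocks

variable {m n R : Type*} [Fintype m] [Fintype n] [DecidableEq m] [DecidableEq n] [CommRing R]

lemma det_fromBlocks_replicateCol_replicateRow {A : Matrix m m R} (hA : IsUnit A.det)
    (u v : m → R) (d : R) :
    (fromBlocks A (replicateCol Unit u) (replicateRow Unit v) (of fun _ _ => d)).det =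
      A.det * (d - v ⬝ᵥ A⁻¹ *ᵥ u) := by
  have := invertibleOfIsUnitDet A hA
  rw [det_fromBlocks₁₁, det_unique (n := Unit), invOf_eq_nonsing_inv, Matrix.sub_apply, of_apply,
    Matrix.mul_assoc, ← replicateCol_mulVec, replicateRow_mul_replicateCol_apply]

lemma sumElim_dotProduct_inv_fromBlocks_zero_mulVec {A : Matrix m m R} {D : Matrix n n R}
    (hA : IsUnit A.det) (hD : IsUnit D.det) (u₁ v₁ : m → R) (u₂ v₂ : n → R) :
    Sum.elim v₁ v₂ ⬝ᵥ (fromBlocks A 0 0 D)⁻¹ *ᵥ Sum.elim u₁ u₂ =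
      v₁ ⬝ᵥ A⁻¹ *ᵥ u₁ + v₂ ⬝ᵥ D⁻¹ *ᵥ u₂ := by
  rw [inv_fromBlocks_zero₂₁_of_isUnit_iff _ _ _
    (iff_of_true ((isUnit_iff_isUnit_det A).mpr hA) ((isUnit_iff_isUnit_det D).mpr hD))]
  simp [fromBlocks_mulVec, sumElim_dotProduct_sumElim]

end Blocks

section Legs

variable {R : Type*} [CommRing R]

abbrev LegVertex (a b c : ℕ) := Fin (a + 1) ⊕ (Fin (b + 1) ⊕ Fin (c + 1))

variable (R) in
def legsGram (a b c : ℕ) : Matrix (LegVertex a b c) (LegVertex a b c) R :=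
  fromBlocks (pathGram R (a + 1)) 0 0 (fromBlocks (pathGram R (b + 1)) 0 0 (pathGram R (c + 1)))

variable (R) in
def legStarts (a b c : ℕ) : LegVertex a b c → R :=
  Sum.elim (Pi.single 0 1) (Sum.elim (Pi.single 0 1) (Pi.single 0 1))

lemma det_legsGram (a b c : ℕ) :
    (legsGram R a b c).det = (-1) ^ (a + b + c + 3) * ((a + 2) * (b + 2) * (c + 2)) := by
  simp only [legsGram, det_fromBlocks_zero₂₁, det_pathGram]
  push_cast
  ring

lemma legStarts_dotProduct_inv_legsGram_mulVec {K : Type*} [Field K] [CharZero K] (a b c : ℕ) :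
    legStarts K a b c ⬝ᵥ (legsGram K a b c)⁻¹ *ᵥ legStarts K a b c =
      -(a + 1) / (a + 2) - (b + 1) / (b + 2) - (c + 1) / (c + 2) := by
  have hbc : IsUnit (fromBlocks (pathGram K (b + 1)) 0 0 (pathGram K (c + 1))).det := by
    simpa only [det_fromBlocks_zero₂₁] using (isUnit_det_pathGram _).mul (isUnit_det_pathGram _)
  rw [legStarts, legsGram, sumElim_dotProduct_inv_fromBlocks_zero_mulVec
      (isUnit_det_pathGram _) hbc,
    sumElim_dotProduct_inv_fromBlocks_zero_mulVec (isUnit_det_pathGram _) (isUnit_det_pathGram _)]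
  simp only [mulVec_single_one, single_one_dotProduct, col_apply, inv_pathGram_zero_zero]
  ring

lemma TGram_map_submatrix_eq_fromBlocks (a b c : ℕ) :
    ((TGram (a + 2) (b + 2) (c + 2)).map (Int.cast : ℤ → R)).submatrix
        (Equiv.optionEquivSumPUnit _).symm (Equiv.optionEquivSumPUnit _).symm =
      fromBlocks (legsGram R a b c) (replicateCol Unit (legStarts R a b c))
        (replicateRow Unit (legStarts R a b c)) (of fun _ _ => -2) := by
  ext (((i | i | i) | _)) (((j | j | j) | _)) <;>
    simp [TGram, TAdj, legAdj, legsGram, pathGram, legStarts, Pi.single_apply, Fin.ext_iff,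
      -Fin.val_eq_zero_iff]

end Legs

/-- The determinant of the Gram matrix of `T_{p,q,r}` is
`(-1)^(p+q+r-1) * (pqr - pq - pr - qr)`. -/
theorem TGram_det (p q r : ℕ) (hp : 2 ≤ p) (hq : 2 ≤ q) (hr : 2 ≤ r) :
    (TGram p q r).det =
      (-1) ^ (p + q + r - 1) *
        ((p : ℤ) * q * r - (p : ℤ) * q - (p : ℤ) * r - (q : ℤ) * r) := by
  obtain ⟨a, rfl⟩ : ∃ a, p = a + 2 := ⟨p - 2, by omega⟩
  obtain ⟨b, rfl⟩ : ∃ b, q = b + 2 := ⟨q - 2, by omega⟩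
  obtain ⟨c, rfl⟩ : ∃ c, r = c + 2 := ⟨r - 2, by omega⟩
  apply Int.cast_injective (α := ℚ)
  have hlegs : IsUnit (legsGram ℚ a b c).det := by
    rw [det_legsGram, isUnit_iff_ne_zero]
    positivity
  rw [Int.cast_det, ← det_submatrix_equiv_self (Equiv.optionEquivSumPUnit _).symm,
    TGram_map_submatrix_eq_fromBlocks, det_fromBlocks_replicateCol_replicateRow hlegs,
    legStarts_dotProduct_inv_legsGram_mulVec, det_legsGram,
    show a + 2 + (b + 2) + (c + 2) - 1 = a + b + c + 3 + 2 by omega, pow_add]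
  push_cast
  field_simp
  ring
end

section
/- Let p, q, r ≥ 2 be integers and let G be the Gram matrix of the T_{p,q,r} lattice. Then G is invertible over ℚ (equivalently, the bilinear form of T_{p,q,r} is nondegenerate) if and only if pqr ≠ pq + pr + qr, i.e. if and only if 1/p + 1/q + 1/r ≠ 1. -/
/-!
A kernel vector of the Gram matrix satisfies `x (k - 1) - 2 x k + x (k + 1) = 0` along every leg,
with `x = 0` one step past the end of the leg, so it decreases linearly from its value `c` at the
centre and equals `(1 - 1/p) c` at the first vertex of a leg of length `p`. The row of the centre
then reads `c (1 - 1/p - 1/q - 1/r) = 0`, and `c = 0` forces `x = 0`; conversely for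
`1/p + 1/q + 1/r = 1` the linear profile with `c = 1` is a kernel vector.
-/

open Matrix

section SecondDifference

variable {R : Type*} [CommRing R] {K : Type*} [Field K] [CharZero K]

lemma eq_add_mul_of_secondDiff_eq_zero {y : ℕ → R} {n : ℕ}
    (h : ∀ k, k + 2 ≤ n → y k - 2 * y (k + 1) + y (k + 2) = 0) :
    ∀ j ≤ n, y j = y 0 + j * (y 1 - y 0) := by
  intro j
  induction j using Nat.twoStepInduction with
  | zero => simp
  | one => simp
  | more j ih₀ ih₁ =>
    intro hj
    push_cast at ih₁ ⊢
    linear_combination h j hj - ih₀ (by omega) + 2 * ih₁ (by omega)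

def VanishesLinearlyAt (n : ℕ) (y : ℕ → R) : Prop :=
  ∀ j ≤ n, (n : R) * y j = (n - j) * y 0

lemma VanishesLinearlyAt.eq_zero {n : ℕ} {y : ℕ → K} (h : VanishesLinearlyAt n y) (hn : n ≠ 0)
    (h0 : y 0 = 0) {j : ℕ} (hj : j ≤ n) : y j = 0 := by
  simpa [h0, hn] using h j hj

lemma secondDiff_eq_zero_iff {y : ℕ → K} {n : ℕ} (hn : n ≠ 0) (hy : y n = 0) :
    (∀ k, k + 2 ≤ n → y k - 2 * y (k + 1) + y (k + 2) = 0) ↔ VanishesLinearlyAt n y := by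
  constructor
  · intro h j hj
    have affine := eq_add_mul_of_secondDiff_eq_zero h
    have hyn := affine n le_rfl
    rw [hy] at hyn
    rw [affine j hj]
    linear_combination (-(j : K)) * hyn
  · intro h k hk
    apply mul_left_cancel₀ (Nat.cast_ne_zero.2 hn : (n : K) ≠ 0)
    have h₀ := h k (by omega)
    have h₁ := h (k + 1) (by omega)
    have h₂ := h (k + 2) (by omega)
    push_cast at h₁ h₂
    linear_combination h₀ - 2 * h₁ + h₂

end SecondDifference

section Leg

variable {R : Type*} [CommRing R] {K : Type*} [Field K] [CharZero K]

/-- Values along a leg: position `0` is the centre `c`, position `j + 1` the `j`-th leg vertex,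
and positions past the end of the leg carry `0`. -/
def legSeq {a : ℕ} (c : R) (f : Fin a → R) : ℕ → R
  | 0 => c
  | j + 1 => if h : j < a then f ⟨j, h⟩ else 0

@[simp]
lemma legSeq_zero {a : ℕ} (c : R) (f : Fin a → R) : legSeq c f 0 = c := rfl

@[simp]
lemma legSeq_fin_succ {a : ℕ} (c : R) (f : Fin a → R) (i : Fin a) : legSeq c f (i + 1) = f i := by
  simp [legSeq]

lemma legSeq_of_lt {a : ℕ} (c : R) (f : Fin a → R) {m : ℕ} (hm : a < m) : legSeq c f m = 0 := by
  obtain ⟨j, rfl⟩ : ∃ j, m = j + 1 := ⟨m - 1, by omega⟩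
  simp [legSeq, show ¬ j < a by omega]

lemma legSeq_eq_sum {a : ℕ} (c : R) (f : Fin a → R) (m : ℕ) :
    legSeq c f m = (if m = 0 then c else 0) + ∑ j : Fin a, if (j : ℕ) + 1 = m then f j else 0 := by
  rcases m with _ | m
  · simp
  · simp only [legSeq, Nat.add_right_cancel_iff, Nat.add_one_ne_zero, if_false, zero_add]
    split_ifs with h
    · rw [Fintype.sum_eq_single ⟨m, h⟩ fun j hj => if_neg fun hjm => hj (Fin.ext hjm)]
      simp
    · refine (Fintype.sum_eq_zero _ fun j => if_neg fun hjm => h ?_).symm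
      have := j.isLt
      omega

lemma legRow_eq_secondDiff {a : ℕ} (c : R) (f : Fin a → R) (k : Fin a) :
    (if (k : ℕ) = 0 then c else 0) +
        ∑ j, (if k = j then -2 else if legAdj k j then 1 else 0) * f j =
      legSeq c f k - 2 * legSeq c f (k + 1) + legSeq c f (k + 2) := by
  rw [legSeq_eq_sum, legSeq_eq_sum, legSeq_eq_sum]
  simp only [Nat.add_one_ne_zero, if_false, zero_add, Finset.mul_sum, add_sub_assoc, add_assoc,
    ← Finset.sum_sub_distrib, ← Finset.sum_add_distrib]
  congr 1
  refine Finset.sum_congr rfl fun j _ => ?_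
  simp only [legAdj, Bool.or_eq_true, beq_iff_eq, Fin.ext_iff]
  split_ifs <;> first | (exfalso; omega) | ring

lemma legSeq_secondDiff_eq_zero_iff {a n : ℕ} (c : K) (f : Fin a → K) (hn : a + 1 = n) :
    (∀ k : Fin a, legSeq c f k - 2 * legSeq c f (k + 1) + legSeq c f (k + 2) = 0) ↔
      VanishesLinearlyAt n (legSeq c f) := by
  rw [← secondDiff_eq_zero_iff (by omega) (legSeq_of_lt c f (by omega))]
  exact ⟨fun h k hk => h ⟨k, by omega⟩, fun h k => h k (by omega)⟩

lemma vanishesLinearlyAt_legSeq_one_sub {a n : ℕ} (hn : a + 1 = n) :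
    VanishesLinearlyAt n (legSeq (1 : K) fun i : Fin a => 1 - ((i : K) + 1) / n) := by
  have hn0 : (n : K) ≠ 0 := Nat.cast_ne_zero.2 (by omega)
  rintro (_ | j) hj
  · simp
  · by_cases hja : j < a
    · simp only [legSeq, hja, dif_pos]
      field_simp
      push_cast
      ring
    · rw [legSeq_of_lt _ _ (by omega), show j + 1 = n by omega]
      simp

end Leg

section TGram

variable {R : Type*} [CommRing R] {p q r : ℕ}

/-- With `cond` in place of a `Bool`-valued `if`, `simp` can unfold `TAdj` without leaving a
`Decidable` instance about the folded term behind. -/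
lemma TGram_apply (v w : TVertex p q r) :
    TGram p q r v w = if v = w then -2 else cond (TAdj v w) 1 0 := by
  simp only [TGram, of_apply, cond_eq_ite]

lemma TGram_mulVec_inl (x : TVertex p q r → R) (k : Fin (p - 1)) :
    ((TGram p q r).map ((↑) : ℤ → R) *ᵥ x) (some (Sum.inl k)) =
      legSeq (x none) (x ∘ some ∘ Sum.inl) k - 2 * legSeq (x none) (x ∘ some ∘ Sum.inl) (k + 1) +
        legSeq (x none) (x ∘ some ∘ Sum.inl) (k + 2) := by
  rw [← legRow_eq_secondDiff]
  simp [mulVec, dotProduct, TGram_apply, Fintype.sum_option, Fintype.sum_sum_type, TAdj,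
    cond_eq_ite, ite_mul]

lemma TGram_mulVec_inr_inl (x : TVertex p q r → R) (k : Fin (q - 1)) :
    ((TGram p q r).map ((↑) : ℤ → R) *ᵥ x) (some (Sum.inr (Sum.inl k))) =
      legSeq (x none) (x ∘ some ∘ Sum.inr ∘ Sum.inl) k -
          2 * legSeq (x none) (x ∘ some ∘ Sum.inr ∘ Sum.inl) (k + 1) +
        legSeq (x none) (x ∘ some ∘ Sum.inr ∘ Sum.inl) (k + 2) := by
  rw [← legRow_eq_secondDiff]
  simp [mulVec, dotProduct, TGram_apply, Fintype.sum_option, Fintype.sum_sum_type, TAdj,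
    cond_eq_ite, ite_mul]

lemma TGram_mulVec_inr_inr (x : TVertex p q r → R) (k : Fin (r - 1)) :
    ((TGram p q r).map ((↑) : ℤ → R) *ᵥ x) (some (Sum.inr (Sum.inr k))) =
      legSeq (x none) (x ∘ some ∘ Sum.inr ∘ Sum.inr) k -
          2 * legSeq (x none) (x ∘ some ∘ Sum.inr ∘ Sum.inr) (k + 1) +
        legSeq (x none) (x ∘ some ∘ Sum.inr ∘ Sum.inr) (k + 2) := by
  rw [← legRow_eq_secondDiff]
  simp [mulVec, dotProduct, TGram_apply, Fintype.sum_option, Fintype.sum_sum_type, TAdj,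
    cond_eq_ite, ite_mul]

lemma TGram_mulVec_none (x : TVertex p q r → R) :
    ((TGram p q r).map ((↑) : ℤ → R) *ᵥ x) none =
      -2 * x none + legSeq (x none) (x ∘ some ∘ Sum.inl) 1 +
        legSeq (x none) (x ∘ some ∘ Sum.inr ∘ Sum.inl) 1 +
          legSeq (x none) (x ∘ some ∘ Sum.inr ∘ Sum.inr) 1 := by
  simp [legSeq_eq_sum, mulVec, dotProduct, TGram_apply, Fintype.sum_option,
    Fintype.sum_sum_type, TAdj, cond_eq_ite, add_assoc]

end TGram

section Kernel

variable {K : Type*} [Field K] [CharZero K] {p q r : ℕ}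

lemma neg_two_mul_add_add_add_eq_zero_iff (hp : p ≠ 0) (hq : q ≠ 0) (hr : r ≠ 0) {c a b d : K}
    (ha : p * a = (p - 1) * c) (hb : q * b = (q - 1) * c) (hd : r * d = (r - 1) * c) :
    -2 * c + a + b + d = 0 ↔ c * (p * q * r - (p * q + p * r + q * r)) = 0 := by
  have hpqr : (p * q * r : K) ≠ 0 := by simp [hp, hq, hr]
  rw [← mul_right_inj' hpqr, mul_zero]
  constructor <;> intro h
  · linear_combination h - (q * r : K) * ha - (p * r : K) * hb - (p * q : K) * hd
  · linear_combination h + (q * r : K) * ha + (p * r : K) * hb + (p * q : K) * hd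

theorem TGram_mulVec_eq_zero_iff (hp : 1 ≤ p) (hq : 1 ≤ q) (hr : 1 ≤ r) (x : TVertex p q r → K) :
    (TGram p q r).map ((↑) : ℤ → K) *ᵥ x = 0 ↔
      VanishesLinearlyAt p (legSeq (x none) (x ∘ some ∘ Sum.inl)) ∧
        VanishesLinearlyAt q (legSeq (x none) (x ∘ some ∘ Sum.inr ∘ Sum.inl)) ∧
          VanishesLinearlyAt r (legSeq (x none) (x ∘ some ∘ Sum.inr ∘ Sum.inr)) ∧
            x none * (p * q * r - (p * q + p * r + q * r)) = 0 := by
  simp only [funext_iff, Option.forall, Sum.forall, Pi.zero_apply, TGram_mulVec_none,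
    TGram_mulVec_inl, TGram_mulVec_inr_inl, TGram_mulVec_inr_inr]
  rw [legSeq_secondDiff_eq_zero_iff _ _ (by omega : p - 1 + 1 = p),
    legSeq_secondDiff_eq_zero_iff _ _ (by omega : q - 1 + 1 = q),
    legSeq_secondDiff_eq_zero_iff _ _ (by omega : r - 1 + 1 = r)]
  rw [and_comm, and_assoc, and_assoc]
  refine and_congr_right fun hA => and_congr_right fun hB => and_congr_right fun hC => ?_
  exact neg_two_mul_add_add_add_eq_zero_iff (by omega) (by omega) (by omega)
    (by simpa using hA 1 hp) (by simpa using hB 1 hq) (by simpa using hC 1 hr)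

/-- Up to scaling, the only vector annihilated by the rows of the leg vertices. -/
def tKernelVec (p q r : ℕ) : TVertex p q r → K
  | none => 1
  | some (Sum.inl i) => 1 - ((i : K) + 1) / p
  | some (Sum.inr (Sum.inl i)) => 1 - ((i : K) + 1) / q
  | some (Sum.inr (Sum.inr i)) => 1 - ((i : K) + 1) / r

lemma TGram_mulVec_tKernelVec (hp : 1 ≤ p) (hq : 1 ≤ q) (hr : 1 ≤ r)
    (h : (p : K) * q * r = p * q + p * r + q * r) :
    (TGram p q r).map ((↑) : ℤ → K) *ᵥ tKernelVec p q r = 0 :=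
  (TGram_mulVec_eq_zero_iff hp hq hr _).2
    ⟨vanishesLinearlyAt_legSeq_one_sub (by omega), vanishesLinearlyAt_legSeq_one_sub (by omega),
      vanishesLinearlyAt_legSeq_one_sub (by omega), by rw [h, sub_self, mul_zero]⟩

lemma eq_zero_of_TGram_mulVec_eq_zero (hp : 1 ≤ p) (hq : 1 ≤ q) (hr : 1 ≤ r)
    {x : TVertex p q r → K} (hx : (TGram p q r).map ((↑) : ℤ → K) *ᵥ x = 0) (h0 : x none = 0) :
    x = 0 := by
  obtain ⟨hA, hB, hC, -⟩ := (TGram_mulVec_eq_zero_iff hp hq hr x).1 hx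
  funext v
  rcases v with _ | i | i | i
  · exact h0
  · simpa using hA.eq_zero (by omega) h0 (j := i + 1) (by omega)
  · simpa using hB.eq_zero (by omega) h0 (j := i + 1) (by omega)
  · simpa using hC.eq_zero (by omega) h0 (j := i + 1) (by omega)

end Kernel

/-- The Gram matrix of `T_{p,q,r}` is invertible over `ℚ` (the bilinear form is
nondegenerate) if and only if `pqr ≠ pq + pr + qr`, i.e. `1/p + 1/q + 1/r ≠ 1`. -/
theorem TGram_nondegenerate_iff (p q r : ℕ) (hp : 2 ≤ p) (hq : 2 ≤ q) (hr : 2 ≤ r) :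
    IsUnit ((TGram p q r).map ((↑) : ℤ → ℚ)) ↔
      (p : ℚ) * q * r ≠ (p : ℚ) * q + (p : ℚ) * r + (q : ℚ) * r := by
  rw [isUnit_iff_isUnit_det, isUnit_iff_ne_zero, Ne, ← exists_mulVec_eq_zero_iff, not_iff_not]
  constructor
  · rintro ⟨x, hx0, hx⟩
    have hcentre : x none ≠ 0 := fun h0 =>
      hx0 (eq_zero_of_TGram_mulVec_eq_zero (by omega) (by omega) (by omega) hx h0)
    obtain ⟨-, -, -, h⟩ := (TGram_mulVec_eq_zero_iff (by omega) (by omega) (by omega) x).1 hx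
    exact sub_eq_zero.1 ((mul_eq_zero.1 h).resolve_left hcentre)
  · intro h
    exact ⟨tKernelVec p q r, fun h0 => one_ne_zero (congrFun h0 none),
      TGram_mulVec_tKernelVec (by omega) (by omega) (by omega) h⟩
end

section
/- Let n ≥ 1, let p = (p_1,…,p_n) be an n-tuple of positive integers, let ι = (i_1,…,i_n) be an n-tuple of integers with 1 ≤ i_j ≤ ⌈p_j/2⌉ for each j, and let k ≥ −4 be an even integer. Let G be the Gram matrix of the lattice M_{p,ι,k} (a square matrix of size 1 + p_1 + ⋯ + p_n). Then det G = (−1)^{p_1+⋯+p_n} · ( k·∏_{j=1}^n (p_j+1) + Σ_{j=1}^n i_j (p_j+1−i_j) ∏_{l≠j} (p_l+1) ); equivalently, det G = (−1)^{p_1+⋯+p_n} (p_1+1)⋯(p_n+1) ( k + Σ_{j=1}^n i_j(p_j+1−i_j)/(p_j+1) ). (This is Dolgachev's discriminant formula for M_{p,ι,k}, up to the paper's sign convention for the discriminant.) -/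
/-- The vertex set of the `M_{p,ι,k}` graph: a central vertex (`none`) together
with, for each `j : Fin n`, a path (`A_{p j}` Dynkin diagram) of `p j` vertices.
Its cardinality is `1 + p 1 + ⋯ + p n`. -/
abbrev MVertex (n : ℕ) (p : Fin n → ℕ) := Option ((j : Fin n) × Fin (p j))

/-- Adjacency in the `M_{p,ι,k}` graph: consecutive vertices of each path are
adjacent, and the central vertex is adjacent to the `ι j`-th vertex (1-based)
of the `j`-th path. -/
def MAdj {n : ℕ} {p : Fin n → ℕ} (ι : Fin n → ℕ) :
    MVertex n p → MVertex n p → Bool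
  | none, none => false
  | none, some ⟨j, i⟩ => i.val + 1 == ι j
  | some ⟨j, i⟩, none => i.val + 1 == ι j
  | some ⟨j, i⟩, some ⟨l, i'⟩ =>
      decide (j = l) && ((i.val + 1 == i'.val) || (i'.val + 1 == i.val))

/-- The Gram matrix of the `M_{p,ι,k}` lattice: the central vertex is labelled `k`,
every other vertex is labelled `-2`, with off-diagonal entry `1` for adjacent
vertices and `0` otherwise. -/
def MGram (n : ℕ) (p : Fin n → ℕ) (ι : Fin n → ℕ) (k : ℤ) :
    Matrix (MVertex n p) (MVertex n p) ℤ :=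
  Matrix.of fun v w =>
    if v = w then (match v with | none => k | some _ => -2)
    else if MAdj ι v w then 1 else 0

/-!
The Gram matrix is the central entry `k` bordered by the block-diagonal matrix `D = ⊕ⱼ A_{pⱼ}`
of the negative Cartan matrices of the paths, so by the Schur complement
`det G = det D · (k - bᵀ D⁻¹ b)`, where `b` is the sum of the basis vectors of the attachment
vertices. The inverse of `A_m` is `-g/(m+1)`, where `g a b = min a b · (m + 1 - max a b)` is the
Green's function of the path `0, 1, …, m + 1` killed at both ends, so the attachment vertex `i`
of a path with `p` vertices contributes `-i (p + 1 - i)/(p + 1)` to `bᵀ D⁻¹ b`. The same Schur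
complement, applied to a path bordered by one more end vertex, gives `det A_m = (-1)^m (m + 1)`.
-/

open Matrix

namespace Matrix

theorem det_option_eq_det_mul_schur {K ι : Type*} [Field K] [Fintype ι] [DecidableEq ι]
    (M : Matrix (Option ι) (Option ι) K) (N : Matrix ι ι K)
    (hN : M.submatrix some some * N = 1) :
    M.det = (M.submatrix some some).det *
      (M none none - ∑ a, ∑ b, M none (some a) * N a b * M (some b) none) := by
  let e : ι ⊕ PUnit ≃ Option ι := (Equiv.optionEquivSumPUnit.{0} ι).symm
  have hblocks : M.submatrix e e = fromBlocks (M.submatrix some some)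
      (of fun a _ => M (some a) none) (of fun _ b => M none (some b))
      (of fun _ _ => M none none) := by
    ext (a | a) (b | b) <;> rfl
  let := invertibleOfRightInverse _ _ hN
  rw [← det_submatrix_equiv_self e, hblocks, det_fromBlocks₁₁, invOf_eq_right_inv hN,
    det_unique (n := PUnit)]
  simp only [sub_apply, mul_apply, of_apply, Finset.sum_mul]
  rw [Finset.sum_comm]

variable {R o : Type*} [Fintype o] [DecidableEq o] {m : o → Type*} [∀ j, Fintype (m j)]

theorem det_blockDiagonal' [CommRing R] [LinearOrder o] [∀ j, DecidableEq (m j)]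
    (d : ∀ j, Matrix (m j) (m j) R) :
    (blockDiagonal' d).det = ∏ j, (d j).det := by
  rw [(blockTriangular_blockDiagonal' d).det_fintype]
  refine Finset.prod_congr rfl fun j _ => ?_
  let e : m j ≃ {a : Σ l, m l // a.1 = j} :=
    { toFun := fun i => ⟨⟨j, i⟩, rfl⟩
      invFun := fun a => cast (congrArg m a.2) a.1.2
      left_inv := fun i => rfl
      right_inv := by rintro ⟨⟨l, i⟩, rfl⟩; rfl }
  rw [← det_submatrix_equiv_self e]
  congr 1
  ext i i'
  simp [toSquareBlock_def, e]

theorem sum_sum_mul_blockDiagonal'_mul [CommSemiring R] (d : ∀ j, Matrix (m j) (m j) R)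
    (u w : (Σ j, m j) → R) :
    ∑ s, ∑ t, u s * blockDiagonal' d s t * w t =
      ∑ j, ∑ i, ∑ i', u ⟨j, i⟩ * d j i i' * w ⟨j, i'⟩ := by
  simp only [Fintype.sum_sigma]
  refine Finset.sum_congr rfl fun j _ => Finset.sum_congr rfl fun i _ => ?_
  rw [Finset.sum_eq_single j]
  · simp [blockDiagonal'_apply_eq]
  · intro l _ hl
    simp [blockDiagonal'_apply_ne d _ _ (Ne.symm hl)]
  · simp

end Matrix

theorem Finset.prod_mul_sum_div {ι K : Type*} [Field K] [DecidableEq ι] (s : Finset ι)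
    (a b : ι → K) (ha : ∀ j ∈ s, a j ≠ 0) :
    (∏ j ∈ s, a j) * ∑ j ∈ s, b j / a j = ∑ j ∈ s, b j * ∏ l ∈ s.erase j, a l := by
  rw [Finset.mul_sum]
  refine Finset.sum_congr rfl fun j hj => ?_
  rw [← Finset.mul_prod_erase s a hj]
  field_simp [ha j hj]

theorem Fin.sum_ite_val_add_one_eq {M : Type*} [AddCommMonoid M] {m c : ℕ} (hc : c ≤ m + 1)
    (f : ℕ → M) (h0 : f 0 = 0) (hm : f (m + 1) = 0) :
    ∑ i : Fin m, (if (i : ℕ) + 1 = c then f (i + 1) else 0) = f c := by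
  by_cases hc' : 1 ≤ c ∧ c ≤ m
  · rw [Finset.sum_eq_single ⟨c - 1, by omega⟩]
    · simp only [Nat.sub_add_cancel hc'.1, if_true]
    · exact fun i _ hi => if_neg fun h => hi (Fin.ext (show (i : ℕ) = c - 1 by omega))
    · simp
  · obtain rfl | rfl : c = 0 ∨ c = m + 1 := by omega
    · simp [h0]
    · simp only [hm]
      exact Finset.sum_eq_zero fun i _ => if_neg (by omega)

def pathMatrix (R : Type*) [Ring R] (m : ℕ) : Matrix (Fin m) (Fin m) R :=
  of fun i j => if i = j then -2 else if (i : ℕ) + 1 = j ∨ (j : ℕ) + 1 = i then 1 else 0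

section PathMatrix

variable {R : Type*} [Ring R] {m : ℕ}

theorem pathMatrix_self (i : Fin m) : pathMatrix R m i i = -2 := by
  simp [pathMatrix]

theorem pathMatrix_apply_eq (i j : Fin m) :
    pathMatrix R m i j = (if (j : ℕ) + 1 = i then 1 else 0) +
      (if (j : ℕ) + 1 = i + 2 then 1 else 0) - 2 * (if (j : ℕ) + 1 = i + 1 then 1 else 0) := by
  simp only [pathMatrix, of_apply, Fin.ext_iff]
  split_ifs <;> first | (exfalso; omega) | norm_num

theorem sum_pathMatrix_mul (v : ℕ → R) (h0 : v 0 = 0) (hm : v (m + 1) = 0) (i : Fin m) :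
    ∑ j, pathMatrix R m i j * v (j + 1) = v i + v (i + 2) - 2 * v (i + 1) := by
  simp only [pathMatrix_apply_eq, sub_mul, add_mul, mul_assoc, ite_mul, one_mul, zero_mul,
    Finset.sum_add_distrib, Finset.sum_sub_distrib, ← Finset.mul_sum]
  rw [Fin.sum_ite_val_add_one_eq (by omega) v h0 hm, Fin.sum_ite_val_add_one_eq (by omega) v h0 hm,
    Fin.sum_ite_val_add_one_eq (by omega) v h0 hm]

theorem pathMatrix_submatrix_succ :
    (pathMatrix R (m + 1)).submatrix Fin.succ Fin.succ = pathMatrix R m := by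
  ext i j
  simp [pathMatrix, Fin.ext_iff]

theorem pathMatrix_zero_succ (i : Fin m) :
    pathMatrix R (m + 1) 0 i.succ = if (i : ℕ) + 1 = 1 then 1 else 0 := by
  simp [pathMatrix, Fin.ext_iff]

theorem pathMatrix_succ_zero (i : Fin m) :
    pathMatrix R (m + 1) i.succ 0 = if (i : ℕ) + 1 = 1 then 1 else 0 := by
  simp [pathMatrix, Fin.ext_iff]

end PathMatrix

-- Vertices of the path are numbered `1, …, m`; `0` and `m + 1` are the boundary.
def pathGreen (m a b : ℕ) : ℤ := min a b * ((m : ℤ) + 1 - max a b)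

theorem pathGreen_comm (m a b : ℕ) : pathGreen m a b = pathGreen m b a := by
  simp only [pathGreen, min_comm, max_comm]

theorem pathGreen_zero_left (m b : ℕ) : pathGreen m 0 b = 0 := by
  simp [pathGreen]

theorem pathGreen_left_eq_zero {m b : ℕ} (hb : b ≤ m + 1) : pathGreen m (m + 1) b = 0 := by
  rw [pathGreen, max_eq_left hb]
  push_cast
  ring

theorem pathGreen_self (m c : ℕ) : pathGreen m c c = c * ((m : ℤ) + 1 - c) := by
  simp [pathGreen]

theorem pathGreen_second_difference (m a b : ℕ) :
    pathGreen m a b + pathGreen m (a + 2) b - 2 * pathGreen m (a + 1) b =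
      if a + 1 = b then -((m : ℤ) + 1) else 0 := by
  simp only [pathGreen]
  rcases lt_trichotomy (a + 1) b with h | h | h
  · rw [if_neg h.ne, min_eq_left (by omega), min_eq_left (by omega), min_eq_left (by omega),
      max_eq_right (by omega), max_eq_right (by omega), max_eq_right (by omega)]
    push_cast
    ring
  · subst h
    rw [if_pos rfl, min_eq_left (by omega), min_eq_right (by omega), min_eq_left le_rfl,
      max_eq_right (by omega), max_eq_left (by omega), max_eq_left le_rfl]
    push_cast
    ring
  · rw [if_neg h.ne', min_eq_right (by omega), min_eq_right (by omega), min_eq_right (by omega),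
      max_eq_left (by omega), max_eq_left (by omega), max_eq_left (by omega)]
    push_cast
    ring

def pathMatrixInv (K : Type*) [Field K] (m : ℕ) : Matrix (Fin m) (Fin m) K :=
  of fun i j => -(pathGreen m (i + 1) (j + 1) : K) / (m + 1)

section PathInverse

variable {K : Type*} [Field K] {m : ℕ}

theorem pathMatrix_mul_pathMatrixInv [CharZero K] : pathMatrix K m * pathMatrixInv K m = 1 := by
  ext i j
  let v : ℕ → K := fun a => -(pathGreen m a (j + 1) : K) / (m + 1)
  have h := congrArg (Int.cast : ℤ → K) (pathGreen_second_difference m i (j + 1))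
  calc ∑ x, pathMatrix K m i x * pathMatrixInv K m x j
        = ∑ x, pathMatrix K m i x * v (x + 1) := rfl
    _ = v i + v (i + 2) - 2 * v (i + 1) :=
      sum_pathMatrix_mul v (by simp [v, pathGreen_zero_left])
        (by simp [v, pathGreen_left_eq_zero (show (j : ℕ) + 1 ≤ m + 1 by omega)]) i
    _ = (1 : Matrix (Fin m) (Fin m) K) i j := by
      have hm : (m : K) + 1 ≠ 0 := Nat.cast_add_one_ne_zero m
      simp only [v, one_apply, Fin.ext_iff]
      push_cast at h
      field_simp
      split_ifs at h ⊢ <;> linear_combination -h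

theorem sum_sum_indicator_mul_pathMatrixInv {c : ℕ} (hc : c ≤ m + 1) :
    ∑ i : Fin m, ∑ i' : Fin m, (if (i : ℕ) + 1 = c then 1 else 0) * pathMatrixInv K m i i' *
      (if (i' : ℕ) + 1 = c then 1 else 0) = -(c * ((m : K) + 1 - c) / (m + 1)) := by
  let w : ℕ → ℕ → K := fun a b => -(pathGreen m a b : K) / (m + 1)
  calc _ = ∑ i : Fin m, (if (i : ℕ) + 1 = c then w (i + 1) c else 0) := by
        refine Finset.sum_congr rfl fun i _ => ?_
        simp only [mul_ite, ite_mul, mul_one, one_mul, zero_mul, mul_zero]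
        have hi : (i : ℕ) + 1 ≤ m + 1 := by omega
        exact Fin.sum_ite_val_add_one_eq hc
          (fun b => if (i : ℕ) + 1 = c then w (i + 1) b else 0)
          (by simp [w, pathGreen_comm _ _ 0, pathGreen_zero_left])
          (by simp [w, pathGreen_comm _ _ (m + 1), pathGreen_left_eq_zero hi])
    _ = w c c := Fin.sum_ite_val_add_one_eq hc (fun a => w a c)
          (by simp [w, pathGreen_zero_left]) (by simp [w, pathGreen_left_eq_zero hc])
    _ = _ := by simp [w, pathGreen_self, neg_div]

theorem det_pathMatrix [CharZero K] (m : ℕ) : (pathMatrix K m).det = (-1) ^ m * (m + 1) := by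
  induction m with
  | zero => simp
  | succ m ih =>
    let e := (finSuccEquiv m).symm
    let M := (pathMatrix K (m + 1)).submatrix e e
    have hM : M.submatrix some some = pathMatrix K m := pathMatrix_submatrix_succ
    have hm : (m : K) + 1 ≠ 0 := Nat.cast_add_one_ne_zero m
    rw [← det_submatrix_equiv_self e,
      det_option_eq_det_mul_schur M _ (hM ▸ pathMatrix_mul_pathMatrixInv), hM, ih]
    simp only [M, e, submatrix_apply, finSuccEquiv_symm_none, finSuccEquiv_symm_some,
      pathMatrix_self, pathMatrix_zero_succ, pathMatrix_succ_zero]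
    rw [sum_sum_indicator_mul_pathMatrixInv (by omega)]
    field_simp
    push_cast
    ring

end PathInverse

section MGram

variable {R : Type*} [Ring R] {n : ℕ} {p : Fin n → ℕ} (ι : Fin n → ℕ) (k : ℤ)

theorem MGram_map_submatrix_some :
    ((MGram n p ι k).map (Int.cast : ℤ → R)).submatrix some some =
      blockDiagonal' fun j => pathMatrix R (p j) := by
  ext ⟨j, i⟩ ⟨l, i'⟩
  by_cases hjl : j = l
  · subst hjl
    simp [MGram, MAdj, pathMatrix, blockDiagonal'_apply_eq]
  · simp [MGram, MAdj, blockDiagonal'_apply_ne _ _ _ hjl, hjl]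

theorem MGram_none_none : MGram n p ι k none none = k := rfl

theorem MGram_none_some (s : Σ j, Fin (p j)) :
    MGram n p ι k none (some s) = if (s.2 : ℕ) + 1 = ι s.1 then 1 else 0 := by
  simp [MGram, MAdj]

theorem MGram_some_none (s : Σ j, Fin (p j)) :
    MGram n p ι k (some s) none = if (s.2 : ℕ) + 1 = ι s.1 then 1 else 0 := by
  simp [MGram, MAdj]

end MGram

theorem MGram_det_general (n : ℕ) (p ι : Fin n → ℕ)
    (hι₂ : ∀ j, ι j ≤ (p j + 1) / 2)
    (k : ℤ) :
    (MGram n p ι k).det =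
      (-1) ^ (∑ j, p j) *
        (k * ∏ j, ((p j : ℤ) + 1) +
          ∑ j, (ι j : ℤ) * ((p j : ℤ) + 1 - (ι j : ℤ)) *
            ∏ l ∈ Finset.univ.erase j, ((p l : ℤ) + 1)) := by
  have hι : ∀ j, ι j ≤ p j + 1 := fun j => (hι₂ j).trans (by omega)
  let M := (MGram n p ι k).map (Int.cast : ℤ → ℚ)
  have hD : M.submatrix some some = blockDiagonal' fun j => pathMatrix ℚ (p j) :=
    MGram_map_submatrix_some ι k
  have hN : M.submatrix some some * blockDiagonal' (fun j => pathMatrixInv ℚ (p j)) = 1 := by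
    rw [hD, ← blockDiagonal'_mul]
    simp only [pathMatrix_mul_pathMatrixInv]
    exact blockDiagonal'_one
  have hdet : ((MGram n p ι k).det : ℚ) = M.det := (Int.castRingHom ℚ).map_det _
  have hschur := det_option_eq_det_mul_schur M _ hN
  rw [hD, det_blockDiagonal', sum_sum_mul_blockDiagonal'_mul] at hschur
  simp only [M, map_apply, MGram_none_none, MGram_none_some, MGram_some_none, Int.cast_ite,
    Int.cast_one, Int.cast_zero, sum_sum_indicator_mul_pathMatrixInv (hι _), det_pathMatrix,
    Finset.prod_mul_distrib, Finset.prod_pow_eq_pow_sum, Finset.sum_neg_distrib,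
    sub_neg_eq_add] at hschur
  rw [← Int.cast_inj (α := ℚ), hdet, hschur]
  push_cast
  rw [mul_assoc, mul_add (∏ j, _), Finset.prod_mul_sum_div _ _ _ fun j _ =>
    Nat.cast_add_one_ne_zero (p j)]
  ring

/-- Dolgachev's discriminant formula for `M_{p,ι,k}`:
`det G = (-1)^(p₁+⋯+pₙ) * (k·∏ⱼ(pⱼ+1) + Σⱼ iⱼ(pⱼ+1-iⱼ)·∏_{l≠j}(p_l+1))`. -/
theorem MGram_det (n : ℕ) (hn : 1 ≤ n) (p ι : Fin n → ℕ)
    (hp : ∀ j, 1 ≤ p j) (hι₁ : ∀ j, 1 ≤ ι j) (hι₂ : ∀ j, ι j ≤ (p j + 1) / 2)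
    (k : ℤ) (hk : -4 ≤ k) (hkeven : Even k) :
    (MGram n p ι k).det =
      (-1) ^ (∑ j, p j) *
        (k * ∏ j, ((p j : ℤ) + 1) +
          ∑ j, (ι j : ℤ) * ((p j : ℤ) + 1 - (ι j : ℤ)) *
            ∏ l ∈ Finset.univ.erase j, ((p l : ℤ) + 1)) :=
  MGram_det_general n p ι hι₂ k
end

section
/- The lattice D_{16} ⊥ U embeds in E_8 ⊥ E_8 ⊥ U with index 2: there exists an 18×18 integer matrix B with |det B| = 2 such that Bᵀ · (E_8 ⊥ E_8 ⊥ U) · B = D_{16} ⊥ U, where E_8 ⊥ E_8 ⊥ U and D_{16} ⊥ U denote the indicated block-diagonal Gram matrices. -/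
open Matrix

/-- Gram matrix of a vertex-labelled graph on `Fin n`: diagonal entry `d i` at
vertex `i`, off-diagonal entry `1` for vertices joined by an edge in the list
`E` and `0` otherwise. -/
def gramOf (n : ℕ) (d : ℕ → ℤ) (E : List (ℕ × ℕ)) : Matrix (Fin n) (Fin n) ℤ :=
  Matrix.of fun i j =>
    if i = j then d i.val
    else if (i.val, j.val) ∈ E ∨ (j.val, i.val) ∈ E then 1 else 0

/-- The block-diagonal Gram matrix `E₈ ⊥ E₈ ⊥ U`: vertices `0,…,7` and `8,…,15`
form two copies of the `E₈` Dynkin diagram (all labels `-2`), and `16, 17` span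
the hyperbolic plane `U`. -/
def E8_E8_U : Matrix (Fin 18) (Fin 18) ℤ :=
  gramOf 18 (fun i => if i ≤ 15 then -2 else 0)
    [(0,1), (1,2), (2,3), (3,4), (4,5), (5,6), (2,7),
     (8,9), (9,10), (10,11), (11,12), (12,13), (13,14), (10,15),
     (16,17)]

/-- The block-diagonal Gram matrix `D₁₆ ⊥ U`: vertices `0,…,15` form the `D₁₆`
Dynkin diagram (chain `0-…-14` with `15` attached to `13`, all labels `-2`),
and `16, 17` span the hyperbolic plane `U`. -/
def D16_U : Matrix (Fin 18) (Fin 18) ℤ :=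
  gramOf 18 (fun i => if i ≤ 15 then -2 else 0)
    [(0,1), (1,2), (2,3), (3,4), (4,5), (5,6), (6,7), (7,8), (8,9), (9,10),
     (10,11), (11,12), (12,13), (13,14), (13,15),
     (16,17)]

def Bmat : Matrix (Fin 18) (Fin 18) ℤ :=
  !![-2, 0, 0, 0, 0, 0, 0, 2, 0, 0, 0, 0, 0, 0, 0, 0, -4, -3;
    -4, 0, 0, 0, 0, 0, 0, 4, 0, 0, 0, 0, 0, 0, 0, 0, -7, -7;
    -6, 0, 1, 0, -1, 0, 0, 6, 0, 0, 0, 0, 0, 0, 0, 0, -10, -10;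
    -5, 0, 1, 0, -1, 0, 1, 4, 0, 0, 0, 0, 0, 0, 0, 0, -8, -8;
    -4, 1, 0, 0, -1, 0, 1, 3, 0, 0, 0, 0, 0, 0, 0, 0, -6, -6;
    -2, 0, 0, 0, -1, 0, 1, 2, 0, 0, 0, 0, 0, 0, 0, 0, -4, -4;
    -1, 0, 0, 0, -1, 1, 0, 1, 0, 0, 0, 0, 0, 0, 0, 0, -2, -2;
    -3, 0, 1, -1, 0, 0, 0, 3, 0, 0, 0, 0, 0, 0, 0, 0, -5, -5;
    0, 0, 0, 0, 0, 0, 0, 2, 0, 0, 0, 0, 0, 0, 2, -2, -4, -4;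
    0, 0, 0, 0, 0, 0, 0, 3, 0, 0, 0, 0, 0, 0, 4, -3, -7, -7;
    0, 0, 0, 0, 0, 0, 0, 4, 0, 1, -1, 1, -1, 0, 6, -4, -10, -10;
    0, 0, 0, 0, 0, 0, 0, 3, 1, 0, -1, 1, -1, 0, 5, -3, -8, -8;
    0, 0, 0, 0, 0, 0, 0, 2, 1, 0, 0, 0, -1, 0, 4, -2, -6, -6;
    0, 0, 0, 0, 0, 0, 0, 2, 0, 0, 0, 0, -1, 0, 3, -1, -4, -4;
    0, 0, 0, 0, 0, 0, 0, 1, 0, 0, 0, 0, -1, 1, 1, -1, -2, -2;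
    0, 0, 0, 0, 0, 0, 0, 2, 0, 0, 0, 1, -1, 0, 3, -2, -5, -5;
    1, 0, 0, 0, 0, 0, 0, -1, 0, 0, 0, 0, 0, 0, -1, 1, 2, 2;
    0, 0, 0, 0, 0, 0, 0, -1, 0, 0, 0, 0, 0, 0, 0, 0, 2, 2]

def Emat : Matrix (Fin 18) (Fin 18) ℤ :=
  !![1, 0, 0, 0, 0, 0, 0, 0, 0, 0, 0, 0, 0, 0, 0, 0, 0, 0;
    -11, 9, 0, 0, 0, 0, 0, 0, 0, 0, 0, 0, 0, 0, 0, 0, 0, 0;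
    0, -3, 11, 0, 0, 0, 0, 0, 0, 0, 0, 0, 0, 0, 0, 0, 0, 0;
    0, -3, 4, 3, 0, 0, 0, 0, 0, 0, 0, 0, 0, 0, 0, 0, 0, 0;
    -1, 3, 1, -4, 1, 0, 0, 0, 0, 0, 0, 0, 0, 0, 0, 0, 0, 0;
    0, -1, 4, -3, 0, 4, 0, 0, 0, 0, 0, 0, 0, 0, 0, 0, 0, 0;
    0, -1, 4, -3, 0, 1, 3, 0, 0, 0, 0, 0, 0, 0, 0, 0, 0, 0;
    2, -5, 0, 5, -2, 3, -7, 6, 0, 0, 0, 0, 0, 0, 0, 0, 0, 0;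
    2, -5, 0, 5, -2, 3, -7, 6, 4, 0, 0, 0, 0, 0, 0, 0, 0, 0;
    6, -15, 0, 15, -6, 9, -21, 18, 22, 10, 0, 0, 0, 0, 0, 0, 0, 0;
    -13, 30, 0, -30, 13, -17, 43, -39, -41, -35, 10, 0, 0, 0, 0, 0, 0, 0;
    -1, 3, 0, -3, 1, -2, 4, -3, 1, -8, -2, 3, 0, 0, 0, 0, 0, 0;
    1, -2, 0, 2, -1, 1, -3, 3, 5, 1, -2, 1, 1, 0, 0, 0, 0, 0;
    2, -3, 0, 3, -2, 1, -5, 6, 8, -1, 0, 6, -1, 8, 0, 0, 0, 0;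
    1, -2, 0, 2, -1, 1, -3, 3, 5, -1, -2, 1, -1, 2, 2, 0, 0, 0;
    -2, 5, 0, -5, 2, -3, 7, -6, -18, 6, 14, 2, 0, -3, -17, 6, 0, 0;
    2, -3, 0, 3, -2, 1, -5, 6, 6, 2, 2, 6, 0, 5, -1, 2, 4, 0;
    -1, 1, 0, -1, 1, 0, 2, -3, -4, -1, -1, -5, -2, -3, -1, 1, -5, 4]

def L0mat : Matrix (Fin 18) (Fin 18) ℤ :=
  !![1, 1, 0, 0, 1, 0, 1, -1, 0, 1, -1, -1, -1, 1, -1, -1, -1, 1;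
    0, 1, 0, 1, 0, 1, 0, 0, -1, 0, -1, -1, -1, 0, 0, -1, 0, 0;
    0, 0, 1, 0, 0, 0, 0, -1, 0, 0, 1, 0, 1, -1, 1, 0, 0, 0;
    0, 0, 0, 1, 0, 0, 1, 0, -1, 0, 1, 1, 0, -1, 1, -1, -1, 0;
    0, 0, 0, 0, 1, -1, 0, 0, 0, -1, 1, 0, 0, -1, 0, 0, 1, 1;
    0, 0, 0, 0, 0, 1, 0, 1, 0, 0, 1, -1, 1, 1, -1, 1, 0, 0;
    0, 0, 0, 0, 0, 0, 1, 1, 0, 0, 1, -1, 0, 1, 0, 1, -1, 0;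
    0, 0, 0, 0, 0, 0, 0, 1, -1, -1, -1, -1, 1, 1, 1, 0, -1, 0;
    0, 0, 0, 0, 0, 0, 0, 0, 1, 0, 1, -1, -1, -1, -1, 0, 0, -1;
    0, 0, 0, 0, 0, 0, 0, 0, 0, 1, 0, 0, -1, 0, 0, 0, 0, 0;
    0, 0, 0, 0, 0, 0, 0, 0, 0, 0, 1, -1, 0, -1, 0, -1, -1, -1;
    0, 0, 0, 0, 0, 0, 0, 0, 0, 0, 0, 1, 0, 0, 1, 1, 0, 1;
    0, 0, 0, 0, 0, 0, 0, 0, 0, 0, 0, 0, 1, 0, -1, 0, 0, 0;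
    0, 0, 0, 0, 0, 0, 0, 0, 0, 0, 0, 0, 0, 1, -1, 0, 1, 0;
    0, 0, 0, 0, 0, 0, 0, 0, 0, 0, 0, 0, 0, 0, 1, 0, -1, 0;
    0, 0, 0, 0, 0, 0, 0, 0, 0, 0, 0, 0, 0, 0, 0, 1, 0, -1;
    0, 0, 0, 0, 0, 0, 0, 0, 0, 0, 0, 0, 0, 0, 0, 0, 1, 1;
    0, 0, 0, 0, 0, 0, 0, 0, 0, 0, 0, 0, 0, 0, 0, 0, 0, 1]

def Umat : Matrix (Fin 18) (Fin 18) ℤ :=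
  !![-9, 1, -1, 1, -2, 1, 1, 0, -2, -1, 2, -3, 4, -1, -11, 7, 6, 7;
    0, -11, 20, -11, 4, -11, 7, -27, 4, 2, -4, 6, -8, 11, -59, 40, 60, 49;
    0, 0, -3, 11, -5, 0, -6, 97, 17, 14, -17, 20, -34, 11, 148, -105, -251, -251;
    0, 0, 0, 4, -4, 3, -3, 65, 13, 10, -16, 16, -23, 7, 107, -75, -175, -175;
    0, 0, 0, 0, 3, -5, 1, -35, -7, -4, 10, -8, 10, -2, -63, 43, 96, 95;
    0, 0, 0, 0, 0, -3, -1, 55, 3, 6, 0, 8, -17, -3, 77, -45, -129, -129;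
    0, 0, 0, 0, 0, 0, -4, 52, 0, 6, 0, 8, -17, 0, 71, -45, -117, -117;
    0, 0, 0, 0, 0, 0, 0, 4, 18, -4, -2, -4, -15, 6, 33, -11, -31, -29;
    0, 0, 0, 0, 0, 0, 0, 0, 10, 0, -2, -4, -3, 2, 13, -7, -15, -13;
    0, 0, 0, 0, 0, 0, 0, 0, 0, 10, -6, -12, 31, -4, -11, -21, -15, -9;
    0, 0, 0, 0, 0, 0, 0, 0, 0, 0, 3, 26, -53, 2, 18, 33, 10, -3;
    0, 0, 0, 0, 0, 0, 0, 0, 0, 0, 0, 8, -8, -1, 0, 3, 1, 0;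
    0, 0, 0, 0, 0, 0, 0, 0, 0, 0, 0, 0, 4, -2, -2, -2, -1, 0;
    0, 0, 0, 0, 0, 0, 0, 0, 0, 0, 0, 0, 0, -3, -2, 5, 2, 4;
    0, 0, 0, 0, 0, 0, 0, 0, 0, 0, 0, 0, 0, 0, -2, 0, 1, 2;
    0, 0, 0, 0, 0, 0, 0, 0, 0, 0, 0, 0, 0, 0, 0, 8, -5, -7;
    0, 0, 0, 0, 0, 0, 0, 0, 0, 0, 0, 0, 0, 0, 0, 0, -1, 1;
    0, 0, 0, 0, 0, 0, 0, 0, 0, 0, 0, 0, 0, 0, 0, 0, 0, -1]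

def M1mat : Matrix (Fin 18) (Fin 18) ℤ :=
  !![-9, 1, -1, 1, -2, 1, 1, 0, -2, -1, 2, -3, 4, -1, -11, 7, 6, 7;
    -11, 0, 1, 0, -2, 0, 2, -3, -2, -1, 2, -3, 4, 0, -20, 13, 14, 14;
    -3, 0, 0, 1, -1, 0, 0, 8, 1, 1, -1, 1, -2, 1, 8, -6, -19, -19;
    -7, 0, 1, 0, -2, 1, 1, 8, 1, 1, -2, 1, -1, 1, 5, -4, -19, -19;
    -1, 1, 0, 0, 0, 0, 0, -2, 0, 1, -1, 1, 0, 0, -2, 1, 3, 3;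
    -5, 0, 1, -1, -1, 0, 1, 11, 0, 1, 0, 1, -2, -1, 10, -5, -24, -24;
    -5, 0, 1, -1, -1, 1, 0, 10, -1, 1, 0, 1, -2, 0, 8, -5, -20, -20;
    -4, 0, 1, -1, 0, 0, 0, -3, 0, -1, 2, -2, -1, 1, -8, 7, 10, 10;
    0, 0, 0, 0, 0, 0, 0, -1, -2, 1, 0, 0, 3, -1, -5, 1, 4, 4;
    0, 0, 0, 0, 0, 0, 0, 1, -1, 0, 0, 0, 1, 0, 0, -1, -1, -1;
    -1, 0, 0, 0, 0, 0, 0, -1, -1, 1, 0, -1, 2, 0, -4, 1, 3, 3;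
    0, 0, 0, 0, 0, 0, 0, 5, 1, 0, -1, 2, -3, 1, 9, -6, -13, -13;
    0, 0, 0, 0, 0, 0, 0, 1, 1, 0, 0, 0, 0, -1, 3, -1, -4, -4;
    1, 0, 0, 0, 0, 0, 0, 0, 0, 0, 0, 0, 0, -1, 1, 1, 0, 0;
    -1, 0, 0, 0, 0, 0, 0, 2, 0, 0, 0, 0, -1, 1, 2, -2, -4, -4;
    0, 0, 0, 0, 0, 0, 0, 3, 0, 0, 0, 1, -1, 0, 3, -2, -7, -7;
    1, 0, 0, 0, 0, 0, 0, -2, 0, 0, 0, 0, 0, 0, -1, 1, 4, 4;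
    0, 0, 0, 0, 0, 0, 0, -1, 0, 0, 0, 0, 0, 0, 0, 0, 2, 2]

set_option maxHeartbeats 2000000 in
lemma cert1 : L0mat * Bmat = M1mat := by
  have h : ∀ i j, (L0mat * Bmat) i j = M1mat i j := @of_decide_eq_true _ (@Nat.decidableForallFin _ _ fun _ => Nat.decidableForallFin _) rfl
  exact Matrix.ext h

set_option maxHeartbeats 2000000 in
lemma cert2 : Emat * M1mat = Umat := by
  have h : ∀ i j, (Emat * M1mat) i j = Umat i j := @of_decide_eq_true _ (@Nat.decidableForallFin _ _ fun _ => Nat.decidableForallFin _) rfl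
  exact Matrix.ext h

set_option maxHeartbeats 2000000 in
lemma gram_eq : Bmatᵀ * E8_E8_U * Bmat = D16_U := by
  have h : ∀ i j, (Bmatᵀ * E8_E8_U * Bmat) i j = D16_U i j := @of_decide_eq_true _ (@Nat.decidableForallFin _ _ fun _ => Nat.decidableForallFin _) rfl
  exact Matrix.ext h

lemma E_tri : Emat.BlockTriangular OrderDual.toDual := by
  have h : ∀ i j : Fin 18, i < j → Emat i j = 0 := @of_decide_eq_true _ (@Nat.decidableForallFin _ _ fun _ => Nat.decidableForallFin _) rfl
  exact fun i j hij => h i j hij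

lemma L0_tri : L0mat.BlockTriangular id := by
  have h : ∀ i j : Fin 18, j < i → L0mat i j = 0 := @of_decide_eq_true _ (@Nat.decidableForallFin _ _ fun _ => Nat.decidableForallFin _) rfl
  exact fun i j hij => h i j hij

lemma U_tri : Umat.BlockTriangular id := by
  have h : ∀ i j : Fin 18, j < i → Umat i j = 0 := @of_decide_eq_true _ (@Nat.decidableForallFin _ _ fun _ => Nat.decidableForallFin _) rfl
  exact fun i j hij => h i j hij

lemma det_B1 : L0mat.det * Bmat.det = M1mat.det :=
  (Matrix.det_mul L0mat Bmat).symm.trans (congrArg Matrix.det cert1)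
lemma det_B2 : Emat.det * M1mat.det = Umat.det :=
  (Matrix.det_mul Emat M1mat).symm.trans (congrArg Matrix.det cert2)
lemma det_B3 : Emat.det = 39414988800 :=
  (Matrix.det_of_lowerTriangular Emat E_tri).trans
    (by norm_num [Fin.prod_univ_succ, Emat])
lemma det_B4 : L0mat.det = 1 :=
  (Matrix.det_of_upperTriangular L0_tri).trans
    (by norm_num [Fin.prod_univ_succ, L0mat])
lemma det_B5 : Umat.det = -78829977600 :=
  (Matrix.det_of_upperTriangular U_tri).trans
    (by norm_num [Fin.prod_univ_succ, Umat])

lemma det_B : Bmat.det = -2 := by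
  have h1 := det_B1; have h2 := det_B2
  rw [det_B4, one_mul] at h1
  rw [det_B3, det_B5] at h2
  omega

/-- `D₁₆ ⊥ U` embeds in `E₈ ⊥ E₈ ⊥ U` with index `2`. -/
theorem D16_U_index_two_in_E8_E8_U :
    ∃ B : Matrix (Fin 18) (Fin 18) ℤ,
      B.det.natAbs = 2 ∧ Bᵀ * E8_E8_U * B = D16_U := by
  exact ⟨Bmat, by rw [det_B]; rfl, gram_eq⟩
end

section
/- The lattices E_6 ⊥ E_6 ⊥ U and E_8 ⊥ A_2 ⊥ A_2 ⊥ U are isomorphic: the two 14×14 block-diagonal Gram matrices are ℤ-congruent, i.e. there exists an integer matrix P with det P = ±1 such that Pᵀ · (E_6 ⊥ E_6 ⊥ U) · P = E_8 ⊥ A_2 ⊥ A_2 ⊥ U. -/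
open Matrix

/-- The block-diagonal Gram matrix `E₆ ⊥ E₆ ⊥ U`: vertices `0,…,5` and `6,…,11`
form two copies of the `E₆` Dynkin diagram (all labels `-2`), and `12, 13` span
the hyperbolic plane `U`. -/
def E6_E6_U : Matrix (Fin 14) (Fin 14) ℤ :=
  gramOf 14 (fun i => if i ≤ 11 then -2 else 0)
    [(0,1), (1,2), (2,3), (3,4), (2,5),
     (6,7), (7,8), (8,9), (9,10), (8,11),
     (12,13)]

/-- The block-diagonal Gram matrix `E₈ ⊥ A₂ ⊥ A₂ ⊥ U`: vertices `0,…,7` form the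
`E₈` Dynkin diagram, `8,9` and `10,11` two copies of `A₂` (all labels `-2`),
and `12, 13` span the hyperbolic plane `U`. -/
def E8_A2_A2_U : Matrix (Fin 14) (Fin 14) ℤ :=
  gramOf 14 (fun i => if i ≤ 11 then -2 else 0)
    [(0,1), (1,2), (2,3), (3,4), (4,5), (5,6), (2,7),
     (8,9), (10,11),
     (12,13)]

/-!
Both lattices are even and indefinite, of rank 14 and signature (1, 13), and `E₆ ⊥ E₆` and
`A₂ ⊥ A₂` have isometric discriminant forms on `(ℤ/3)²`, so they are isomorphic by Nikulin's
uniqueness theorem for indefinite even lattices. Concretely, an explicit change of basis does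
it, and its unimodularity is certified by an integer inverse.
-/

theorem Matrix.det_eq_one_or_neg_one_of_mul_eq_one {n : Type*} [Fintype n] [DecidableEq n]
    {P Q : Matrix n n ℤ} (h : P * Q = 1) : P.det = 1 ∨ P.det = -1 :=
  Int.isUnit_iff.mp (isUnit_det_of_right_inverse h)

/-- Found by a computer search over reflections in roots and Eichler transvections, minimising
the entries of the matrix and of its inverse. -/
def E8_A2_A2_U_toE6_E6_U : Matrix (Fin 14) (Fin 14) ℤ :=
  !![-1,  0,  1, -1,  0,  0,  0,  0,  0, -1, -1,  0, -1, -1;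
    -2,  0,  1,  0, -1,  0,  0,  0,  0, -2, -2,  0, -2, -2;
     0,  0,  0,  0,  0, -1,  0,  0,  0,  0,  0,  0,  0,  0;
     2,  0, -1,  0,  0,  0,  0,  0,  0,  2,  2,  0,  2,  2;
     1,  0,  0,  0,  0,  0,  0, -1,  0,  1,  1,  0,  1,  1;
     0,  0,  0,  0,  0,  0, -1,  0,  0,  0,  0,  0,  0,  0;
     2, -1,  0,  0,  0,  0,  0,  0,  0,  2,  1,  0,  1,  2;
     0,  0,  0,  0,  0,  0,  0,  0,  0,  1, -1,  0, -1,  1;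
     0,  0,  0,  0,  0,  0,  0,  0,  0,  0, -3,  0, -2,  0;
     0,  0,  0,  0,  0,  0,  0,  0,  0, -1, -2,  0, -2,  0;
     0,  0,  0,  0,  0,  0,  0,  0, -1,  0, -1,  0, -1,  0;
     0,  0,  0,  0,  0,  0,  0,  0,  0,  0, -1, -1, -1,  0;
     3, -1, -1,  0,  1,  0,  0,  0,  0,  3,  3,  0,  3,  3;
     3,  0, -1,  0,  0,  0,  0,  0,  0,  3,  3,  0,  3,  3]

def E6_E6_U_toE8_A2_A2_U : Matrix (Fin 14) (Fin 14) ℤ :=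
  !![ 0, -2,  0,  1,  0,  0,  2, -1,  0,  0,  0,  0, -2, -1;
     0, -1,  0, -1,  0,  0,  0,  0,  0,  0,  0,  0, -1,  1;
     0,  0,  0, -3,  0,  0,  0,  0,  0,  0,  0,  0,  0,  2;
    -1,  0,  0, -2,  0,  0,  0,  0,  0,  0,  0,  0,  0,  1;
     0, -1,  0, -1,  0,  0,  0,  0,  0,  0,  0,  0,  0,  0;
     0,  0, -1,  0,  0,  0,  0,  0,  0,  0,  0,  0,  0,  0;
     0,  0,  0,  0,  0, -1,  0,  0,  0,  0,  0,  0,  0,  0;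
     0,  0,  0, -1, -1,  0,  0,  0,  0,  0,  0,  0,  0,  1;
     0, -1,  0,  1,  0,  0,  1,  0,  0,  0, -1,  0, -1, -1;
     0, -2,  0,  2,  0,  0,  2,  0,  0, -1,  0,  0, -2, -2;
     0, -2,  0,  2,  0,  0,  2,  0, -1,  0,  0,  0, -2, -2;
     0, -1,  0,  1,  0,  0,  1,  0,  0,  0,  0, -1, -1, -1;
     0,  3,  0, -3,  0,  0, -3,  0,  1,  0,  0,  0,  3,  3;
     0,  3,  0, -3,  0,  0, -3,  1,  0,  1,  0,  0,  3,  3]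

theorem E8_A2_A2_U_toE6_E6_U_mul_E6_E6_U_toE8_A2_A2_U :
    E8_A2_A2_U_toE6_E6_U * E6_E6_U_toE8_A2_A2_U = 1 := by
  decide

theorem transpose_mul_E6_E6_U_mul_E8_A2_A2_U_toE6_E6_U :
    E8_A2_A2_U_toE6_E6_Uᵀ * E6_E6_U * E8_A2_A2_U_toE6_E6_U = E8_A2_A2_U := by
  decide

/-- `E₆ ⊥ E₆ ⊥ U ≅ E₈ ⊥ A₂ ⊥ A₂ ⊥ U`: the two Gram matrices are ℤ-congruent. -/
theorem E6_E6_U_isom :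
    ∃ P : Matrix (Fin 14) (Fin 14) ℤ,
      (P.det = 1 ∨ P.det = -1) ∧ Pᵀ * E6_E6_U * P = E8_A2_A2_U :=
  ⟨E8_A2_A2_U_toE6_E6_U,
    Matrix.det_eq_one_or_neg_one_of_mul_eq_one E8_A2_A2_U_toE6_E6_U_mul_E6_E6_U_toE8_A2_A2_U,
    transpose_mul_E6_E6_U_mul_E8_A2_A2_U_toE6_E6_U⟩
end
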